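/- Let G be a countable group, A a finite alphabet, F a set of patterns, and β > 0 with |A| − Σ_{f∈F} |f|·β^{1−|f|} ≥ β. Then for every finite set S ⊆ G, |L_F^(S)| ≥ β^{|S|}; in particular L_F^(S) is nonempty. -/

import Mathlib

/-!
Adding a point `a ∉ S` to a support multiplies the number of locally admissible patterns by at
least `β`. Extending each admissible pattern on `S` by an arbitrary letter at `a` gives
`|A| · |L(S)|` candidates. A candidate that is not admissible contains an occurrence of some
`f ∈ F` at `a s⁻¹` with `s ∈ supp f`, and is then determined by its restriction to
`T = S \ a s⁻¹ • supp f`, which is admissible. The growth bound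
`β ^ |S \ T| · |L(T)| ≤ |L(S)|` is proved for all `T ⊆ S` at once by strong induction on `S`;
with it each pair `(f, s)` accounts for at most `β ^ (1 - |f|) · |L(S)|` bad candidates, so at
least `(|A| - ∑ |f| β ^ (1 - |f|)) · |L(S)| ≥ β · |L(S)|` candidates survive. Taking `T = ∅`,
whose only pattern is admissible since forbidden patterns have nonempty support, gives `β ^ |S|`.
-/

/-- A pattern over a group `G` with alphabet `A`: a finite support together with
a labeling of the group elements (only the values on the support matter). -/
structure Pattern (G A : Type*) where
  supp : Finset G
  val : G → A

/-- A pattern `f` appears in a configuration `x : G → A` if some translate of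
its support carries the same letters. -/
def appearsIn {G A : Type*} [Group G] (f : Pattern G A) (x : G → A) : Prop :=
  ∃ g : G, ∀ s ∈ f.supp, x (g * s) = f.val s

/-- The subshift `X_F`: configurations avoiding every forbidden pattern. -/
def shiftSpace {G A : Type*} [Group G] (F : Set (Pattern G A)) : Set (G → A) :=
  {x | ∀ f ∈ F, ¬ appearsIn f x}

/-- Globally admissible patterns of support `S`: those appearing in some
configuration of `X_F`. -/
def globallyAdmissible {G A : Type*} [Group G] (F : Set (Pattern G A)) (S : Finset G) :
    Set ({g // g ∈ S} → A) :=
  {q | ∃ x ∈ shiftSpace F, ∃ t : G, ∀ s : {g // g ∈ S}, x (t * s.1) = q s}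

/-- `G_F^(n)`: the minimum over supports of size `n` of the number of globally
admissible patterns with that support. -/
noncomputable def globalComplexity {G A : Type*} [Group G] (F : Set (Pattern G A)) (n : ℕ) : ℕ :=
  sInf {k | ∃ S : Finset G, S.card = n ∧ (globallyAdmissible F S).ncard = k}

/-- Locally admissible patterns of support `S`: patterns in which no translate of a
forbidden pattern occurs inside `S`. -/
def locallyAdmissible {G A : Type*} [Group G] (F : Set (Pattern G A)) (S : Finset G) :
    Set ({g // g ∈ S} → A) :=
  {q | ∀ f ∈ F, ∀ g : G,
    ¬ ∃ h : ∀ s ∈ f.supp, g * s ∈ S, ∀ s, ∀ hs : s ∈ f.supp, q ⟨g * s, h s hs⟩ = f.val s}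

open Finset
open scoped Pointwise

theorem Set.ncard_le_tsum_of_subset_iUnion {α ι : Type*} [Finite α] {s : Set α} {t : ι → Set α}
    (hst : s ⊆ ⋃ i, t i) {w : ι → ℝ} (hw : ∀ i, ((t i).ncard : ℝ) ≤ w i) (hsum : Summable w) :
    (s.ncard : ℝ) ≤ ∑' i, w i := by
  obtain ⟨I, hI, hsI⟩ := Set.finite_subset_iUnion s.toFinite hst
  calc (s.ncard : ℝ)
      ≤ ((⋃ i ∈ hI.toFinset, t i).ncard : ℝ) := by
        gcongr
        · exact Set.toFinite _
        · simpa using hsI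
    _ ≤ ∑ i ∈ hI.toFinset, ((t i).ncard : ℝ) := by
        exact_mod_cast hI.toFinset.set_ncard_biUnion_le t
    _ ≤ ∑ i ∈ hI.toFinset, w i := sum_le_sum fun i _ => hw i
    _ ≤ ∑' i, w i := hsum.sum_le_tsum _ fun i _ => (Nat.cast_nonneg _).trans (hw i)

section Extension

variable {G A : Type*} [DecidableEq G] {S : Finset G} {a : G}

def extendAt (a : G) (c : A) (p : {x // x ∈ S} → A) : {x // x ∈ insert a S} → A :=
  fun x => if h : x.1 ∈ S then p ⟨x.1, h⟩ else c

theorem restrict₂_extendAt (c : A) (p : {x // x ∈ S} → A) :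
    Finset.restrict₂ (π := fun _ ↦ A) (subset_insert a S) (extendAt a c p) = p := by
  funext x
  simp [extendAt, x.2]

theorem extendAt_self (ha : a ∉ S) (c : A) (p : {x // x ∈ S} → A) :
    extendAt a c p ⟨a, mem_insert_self a S⟩ = c := by
  simp [extendAt, ha]

theorem card_mul_ncard_le_ncard_preimage_restrict₂ [Finite A] (ha : a ∉ S)
    (P : Set ({x // x ∈ S} → A)) :
    Nat.card A * P.ncard ≤ (Finset.restrict₂ (π := fun _ ↦ A) (subset_insert a S) ⁻¹' P).ncard := by
  rw [← Set.ncard_univ, ← Set.ncard_prod]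
  refine Set.ncard_le_ncard_of_injOn (fun cp => extendAt a cp.1 cp.2) ?_ ?_
  · rintro ⟨c, p⟩ ⟨-, hp⟩
    simpa [Set.mem_preimage, restrict₂_extendAt] using hp
  · rintro ⟨c, p⟩ - ⟨c', p'⟩ - h
    have hc : c = c' := by
      simpa only [extendAt_self ha] using congrFun h ⟨a, mem_insert_self a S⟩
    have hp : p = p' := by
      simpa only [restrict₂_extendAt] using
        congrArg (Finset.restrict₂ (π := fun _ ↦ A) (subset_insert a S)) h
    rw [hc, hp]

end Extension

section Occurrences

variable {G A : Type*} [Group G]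

def OccursAt (f : Pattern G A) (g : G) {S : Finset G} (q : {x // x ∈ S} → A) : Prop :=
  ∃ h : ∀ s ∈ f.supp, g * s ∈ S, ∀ s (hs : s ∈ f.supp), q ⟨g * s, h s hs⟩ = f.val s

theorem mem_locallyAdmissible {F : Set (Pattern G A)} {S : Finset G} {q : {x // x ∈ S} → A} :
    q ∈ locallyAdmissible F S ↔ ∀ f ∈ F, ∀ g, ¬ OccursAt f g q :=
  Iff.rfl

theorem OccursAt.restrict₂ {f : Pattern G A} {g : G} {S T : Finset G} (hTS : T ⊆ S)
    {q : {x // x ∈ S} → A} (hq : OccursAt f g q) (hT : ∀ s ∈ f.supp, g * s ∈ T) :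
    OccursAt f g (Finset.restrict₂ (π := fun _ ↦ A) hTS q) :=
  ⟨hT, fun s hs => hq.2 s hs⟩

theorem OccursAt.of_restrict₂ {f : Pattern G A} {g : G} {S T : Finset G} (hTS : T ⊆ S)
    {q : {x // x ∈ S} → A} (hq : OccursAt f g (Finset.restrict₂ (π := fun _ ↦ A) hTS q)) :
    OccursAt f g q :=
  ⟨fun s hs => hTS (hq.1 s hs), fun s hs => hq.2 s hs⟩

theorem restrict₂_mem_locallyAdmissible {F : Set (Pattern G A)} {S T : Finset G} (hTS : T ⊆ S)
    {q : {x // x ∈ S} → A} (hq : q ∈ locallyAdmissible F S) :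
    Finset.restrict₂ (π := fun _ ↦ A) hTS q ∈ locallyAdmissible F T :=
  fun f hf g hocc => hq f hf g (OccursAt.of_restrict₂ hTS hocc)

theorem OccursAt.eq_of_restrict₂_eq [DecidableEq G] {f : Pattern G A} {g : G} {T U : Finset G}
    (hTU : T ⊆ U) (hcover : U \ T ⊆ g • f.supp) {q q' : {x // x ∈ U} → A} (hq : OccursAt f g q)
    (hq' : OccursAt f g q')
    (hqq' : Finset.restrict₂ (π := fun _ ↦ A) hTU q = Finset.restrict₂ (π := fun _ ↦ A) hTU q') :
    q = q' := by
  funext x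
  by_cases hxT : x.1 ∈ T
  · exact congrFun hqq' ⟨x.1, hxT⟩
  · obtain ⟨s, hs, hgs⟩ := mem_smul_finset.mp (hcover (mem_sdiff.mpr ⟨x.2, hxT⟩))
    obtain rfl : x = ⟨g * s, hq.1 s hs⟩ := Subtype.ext hgs.symm
    rw [hq.2 s hs, hq'.2 s hs]

theorem ncard_occursAt_le [DecidableEq G] [Finite A] {f : Pattern G A} {g : G} {T U : Finset G}
    (hTU : T ⊆ U) (hcover : U \ T ⊆ g • f.supp) (P : Set ({x // x ∈ T} → A)) :
    {q | Finset.restrict₂ (π := fun _ ↦ A) hTU q ∈ P ∧ OccursAt f g q}.ncard ≤ P.ncard :=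
  Set.ncard_le_ncard_of_injOn _ (fun _ hq => hq.1)
    (fun _ hq _ hq' => OccursAt.eq_of_restrict₂_eq hTU hcover hq.2 hq'.2)

theorem exists_occursAt_mul_inv_of_notMem_locallyAdmissible_insert [DecidableEq G]
    {F : Set (Pattern G A)} {S : Finset G} {a : G} {q : {x // x ∈ insert a S} → A}
    (hS : Finset.restrict₂ (π := fun _ ↦ A) (subset_insert a S) q ∈ locallyAdmissible F S)
    (hq : q ∉ locallyAdmissible F (insert a S)) :
    ∃ f ∈ F, ∃ s ∈ f.supp, OccursAt f (a * s⁻¹) q := by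
  simp only [mem_locallyAdmissible, not_forall, not_not] at hq
  obtain ⟨f, hf, g, hocc⟩ := hq
  by_cases hgS : ∀ s ∈ f.supp, g * s ∈ S
  · exact absurd (hocc.restrict₂ (subset_insert a S) hgS) (hS f hf g)
  push Not at hgS
  obtain ⟨s, hs, hgs⟩ := hgS
  have hga : g * s = a := (mem_insert.mp (hocc.1 s hs)).resolve_right hgs
  have hg : a * s⁻¹ = g := by rw [← hga, mul_inv_cancel_right]
  exact ⟨f, hf, s, hs, hg ▸ hocc⟩

theorem ncard_occursAt_mul_inv_le [DecidableEq G] [Finite A] {F : Set (Pattern G A)} {β : ℝ}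
    (hβ : 0 < β) {S : Finset G} {a : G} (ha : a ∉ S)
    (hS : ∀ T ⊆ S, β ^ #(S \ T) * (locallyAdmissible F T).ncard ≤ (locallyAdmissible F S).ncard)
    {f : Pattern G A} {s₀ : G} (hs₀ : s₀ ∈ f.supp) :
    ({q | Finset.restrict₂ (π := fun _ ↦ A) (subset_insert a S) q ∈ locallyAdmissible F S ∧
        OccursAt f (a * s₀⁻¹) q}.ncard : ℝ)
      ≤ β ^ (1 - (#f.supp : ℤ)) * (locallyAdmissible F S).ncard := by
  set g := a * s₀⁻¹
  set B := {q | Finset.restrict₂ (π := fun _ ↦ A) (subset_insert a S) q ∈ locallyAdmissible F S ∧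
    OccursAt f g q}
  rcases B.eq_empty_or_nonempty with hB | ⟨q₀, -, hq₀⟩
  · rw [hB, Set.ncard_empty, Nat.cast_zero]
    positivity
  have hsub : g • f.supp ⊆ insert a S := by
    intro x hx
    obtain ⟨s, hs, rfl⟩ := mem_smul_finset.mp hx
    exact hq₀.1 s hs
  have hag : a ∈ g • f.supp := mem_smul_finset.mpr ⟨s₀, hs₀, by simp [g]⟩
  set T := S \ g • f.supp
  have hTS : T ⊆ S := sdiff_subset
  have hTU : T ⊆ insert a S := hTS.trans (subset_insert a S)
  have hcover : insert a S \ T ⊆ g • f.supp := by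
    intro x hx
    obtain ⟨hxU, hxT⟩ := mem_sdiff.mp hx
    rcases mem_insert.mp hxU with rfl | hxS
    · exact hag
    · simpa [T, hxS] using hxT
  have hcard : #f.supp = #(S \ T) + 1 := by
    have : g • f.supp = insert a (S \ T) := by
      rw [sdiff_sdiff_right_self, inf_eq_inter, ← insert_inter_of_mem hag,
        inter_eq_right.mpr hsub]
    rw [← card_smul_finset g, this, card_insert_of_notMem fun h => ha (mem_sdiff.mp h).1]
  have hBT : B.ncard ≤ (locallyAdmissible F T).ncard := by
    refine (Set.ncard_le_ncard ?_).trans (ncard_occursAt_le hTU hcover _)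
    rintro q ⟨hqS, hocc⟩
    exact ⟨restrict₂_mem_locallyAdmissible hTS hqS, hocc⟩
  calc (B.ncard : ℝ)
      ≤ (locallyAdmissible F T).ncard := by exact_mod_cast hBT
    _ = β ^ (1 - (#f.supp : ℤ)) * (β ^ #(S \ T) * (locallyAdmissible F T).ncard) := by
        rw [← mul_assoc, ← zpow_natCast, ← zpow_add₀ hβ.ne', hcard, Nat.cast_add_one,
          show 1 - ((#(S \ T) : ℤ) + 1) + #(S \ T) = 0 by ring, zpow_zero, one_mul]
    _ ≤ β ^ (1 - (#f.supp : ℤ)) * (locallyAdmissible F S).ncard := by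
        gcongr
        exact hS T hTS

theorem mul_ncard_locallyAdmissible_le_ncard_insert [DecidableEq G] [Fintype A]
    {F : Set (Pattern G A)} {β : ℝ} (hβ : 0 < β)
    (hsum : Summable fun f : F => (f.1.supp.card : ℝ) * β ^ (1 - (f.1.supp.card : ℤ)))
    (hcond : (Fintype.card A : ℝ) -
        ∑' f : F, (f.1.supp.card : ℝ) * β ^ (1 - (f.1.supp.card : ℤ)) ≥ β)
    {S : Finset G} {a : G} (ha : a ∉ S)
    (hS : ∀ T ⊆ S, β ^ #(S \ T) * (locallyAdmissible F T).ncard ≤ (locallyAdmissible F S).ncard) :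
    β * (locallyAdmissible F S).ncard ≤ (locallyAdmissible F (insert a S)).ncard := by
  set Q := Finset.restrict₂ (π := fun _ ↦ A) (subset_insert a S) ⁻¹' locallyAdmissible F S
  have hQ : (Fintype.card A : ℝ) * (locallyAdmissible F S).ncard ≤ Q.ncard := by
    rw [← Nat.card_eq_fintype_card]
    exact_mod_cast card_mul_ncard_le_ncard_preimage_restrict₂ ha _
  set N : ℝ := ((locallyAdmissible F S).ncard : ℝ)
  have hbad : ((Q \ locallyAdmissible F (insert a S)).ncard : ℝ)
      ≤ ∑' f : F, (f.1.supp.card : ℝ) * β ^ (1 - (f.1.supp.card : ℤ)) * N := by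
    refine Set.ncard_le_tsum_of_subset_iUnion
      (t := fun f : F => ⋃ s ∈ f.1.supp, {q | q ∈ Q ∧ OccursAt f.1 (a * s⁻¹) q})
      ?_ (fun f => ?_) (hsum.mul_right N)
    · rintro q ⟨hqQ, hq⟩
      obtain ⟨f, hf, s, hs, hocc⟩ :=
        exists_occursAt_mul_inv_of_notMem_locallyAdmissible_insert hqQ hq
      exact Set.mem_iUnion.mpr ⟨⟨f, hf⟩, Set.mem_biUnion hs ⟨hqQ, hocc⟩⟩
    · calc _ ≤ ∑ s ∈ f.1.supp, ({q | q ∈ Q ∧ OccursAt f.1 (a * s⁻¹) q}.ncard : ℝ) := by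
            exact_mod_cast f.1.supp.set_ncard_biUnion_le _
        _ ≤ ∑ s ∈ f.1.supp, β ^ (1 - (f.1.supp.card : ℤ)) * N :=
            sum_le_sum fun s hs => ncard_occursAt_mul_inv_le hβ ha hS hs
        _ = _ := by rw [sum_const, nsmul_eq_mul, mul_assoc]
  have hsplit : (Q.ncard : ℝ)
      ≤ (Q \ locallyAdmissible F (insert a S)).ncard
        + (locallyAdmissible F (insert a S)).ncard := by
    exact_mod_cast Set.ncard_le_ncard_sdiff_add_ncard Q _
  rw [tsum_mul_right] at hbad
  have hN : β * N ≤ _ * N := mul_le_mul_of_nonneg_right hcond (Nat.cast_nonneg _)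
  linarith

theorem pow_card_sdiff_mul_ncard_locallyAdmissible_le [DecidableEq G] [Fintype A]
    {F : Set (Pattern G A)} {β : ℝ} (hβ : 0 < β)
    (hsum : Summable fun f : F => (f.1.supp.card : ℝ) * β ^ (1 - (f.1.supp.card : ℤ)))
    (hcond : (Fintype.card A : ℝ) -
        ∑' f : F, (f.1.supp.card : ℝ) * β ^ (1 - (f.1.supp.card : ℤ)) ≥ β)
    (S : Finset G) :
    ∀ T ⊆ S, β ^ #(S \ T) * (locallyAdmissible F T).ncard ≤ (locallyAdmissible F S).ncard := by
  induction S using Finset.strongInduction with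
  | H S ih =>
  intro T hTS
  by_cases hST : S ⊆ T
  · obtain rfl := subset_antisymm hTS hST
    simp
  obtain ⟨a, haS, haT⟩ := not_subset.mp hST
  have hTS' : T ⊆ S.erase a := fun x hx => mem_erase.mpr ⟨fun h => haT (h ▸ hx), hTS hx⟩
  have hcard : #(S \ T) = #(S.erase a \ T) + 1 := by
    rw [erase_sdiff_comm, card_erase_add_one (mem_sdiff.mpr ⟨haS, haT⟩)]
  have hIH := ih (S.erase a) (erase_ssubset haS)
  calc β ^ #(S \ T) * (locallyAdmissible F T).ncard
      = β * (β ^ #(S.erase a \ T) * (locallyAdmissible F T).ncard) := by rw [hcard]; ring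
    _ ≤ β * (locallyAdmissible F (S.erase a)).ncard := by gcongr; exact hIH T hTS'
    _ ≤ (locallyAdmissible F (insert a (S.erase a))).ncard :=
        mul_ncard_locallyAdmissible_le_ncard_insert hβ hsum hcond (notMem_erase a S) hIH
    _ = (locallyAdmissible F S).ncard := by rw [insert_erase haS]

theorem locallyAdmissible_empty {F : Set (Pattern G A)} (hne : ∀ f ∈ F, f.supp.Nonempty) :
    locallyAdmissible F ∅ = Set.univ :=
  Set.eq_univ_of_forall fun _ f hf _ hocc =>
    let ⟨s, hs⟩ := hne f hf
    notMem_empty _ (hocc.1 s hs)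

end Occurrences

theorem locallyAdmissible_card_ge_general {G A : Type*} [Group G] [Fintype A]
    (F : Set (Pattern G A)) (hne : ∀ f ∈ F, f.supp.Nonempty)
    (β : ℝ) (hβ : 0 < β)
    (hsum : Summable fun f : F => (f.1.supp.card : ℝ) * β ^ (1 - (f.1.supp.card : ℤ)))
    (hcond : (Fintype.card A : ℝ) -
        ∑' f : F, (f.1.supp.card : ℝ) * β ^ (1 - (f.1.supp.card : ℤ)) ≥ β)
    (S : Finset G) :
    β ^ S.card ≤ ((locallyAdmissible F S).ncard : ℝ) ∧ (locallyAdmissible F S).Nonempty := by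
  classical
  have hgrowth :=
    pow_card_sdiff_mul_ncard_locallyAdmissible_le hβ hsum hcond S ∅ (empty_subset S)
  rw [sdiff_empty, locallyAdmissible_empty hne, Set.ncard_univ, Nat.card_unique, Nat.cast_one,
    mul_one] at hgrowth
  refine ⟨hgrowth, (Set.ncard_pos).mp ?_⟩
  exact_mod_cast (pow_pos hβ _).trans_le hgrowth

/-- If `|A| - ∑_{f∈F} |f|·β^{1-|f|} ≥ β` then for every finite support `S` there are at
least `β^|S|` locally admissible patterns; in particular some locally admissible pattern
exists. -/
theorem locallyAdmissible_card_ge {G A : Type*} [Group G] [Countable G] [Fintype A]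
    (F : Set (Pattern G A)) (hne : ∀ f ∈ F, f.supp.Nonempty)
    (β : ℝ) (hβ : 0 < β)
    (hsum : Summable fun f : F => (f.1.supp.card : ℝ) * β ^ (1 - (f.1.supp.card : ℤ)))
    (hcond : (Fintype.card A : ℝ) -
        ∑' f : F, (f.1.supp.card : ℝ) * β ^ (1 - (f.1.supp.card : ℤ)) ≥ β)
    (S : Finset G) :
    β ^ S.card ≤ ((locallyAdmissible F S).ncard : ℝ) ∧ (locallyAdmissible F S).Nonempty :=
  locallyAdmissible_card_ge_general F hne β hβ hsum hcond S
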